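/- If dynA* uses a dyn-admissible, dyn-monotonic, and dyn-consistent dynamic heuristic, then the sequence of f-values (g-entry plus h-entry) of the entries it pops from the open queue is non-decreasing over the execution. -/

import Mathlib

open scoped ENNReal Classical

/-! ## Transition systems -/

/-- A labeled transition: (origin, label, target). -/
abbrev Tran (S L : Type) := S × L × S

/-- A transition system with states `S`, labels `L`, a cost function,
a set of labeled transitions, an initial state and a set of goal states. -/
structure TransSys (S L : Type) where
  cost : L → NNReal
  trans : Set (Tran S L)
  init : S
  goal : Set S

namespace TransSys

variable {S L : Type}

/-- `IsPathFrom ts s π s'`: `π` is a path from `s` to `s'` in `ts`. -/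
inductive IsPathFrom (ts : TransSys S L) : S → List (Tran S L) → S → Prop
  | nil (s : S) : IsPathFrom ts s [] s
  | cons {s m e : S} {l : L} {π : List (Tran S L)} :
      (s, l, m) ∈ ts.trans → IsPathFrom ts m π e → IsPathFrom ts s ((s, l, m) :: π) e

/-- The cost of a path: sum of the costs of its labels. -/
def pathCost (ts : TransSys S L) (π : List (Tran S L)) : NNReal :=
  (π.map fun t => ts.cost t.2.1).sum

/-- A state is reachable if there is a path from the initial state to it. -/
def Reachable (ts : TransSys S L) (s : S) : Prop := ∃ π, ts.IsPathFrom ts.init π s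

/-- A solution is a path from the initial state to a goal state. -/
def Solution (ts : TransSys S L) (π : List (Tran S L)) : Prop :=
  ∃ s ∈ ts.goal, ts.IsPathFrom ts.init π s

def Solvable (ts : TransSys S L) : Prop := ∃ π, ts.Solution π

/-- `h*`: minimal cost of a path from `s` to a goal state (`∞` if none exists). -/
noncomputable def hstar (ts : TransSys S L) (s : S) : ℝ≥0∞ :=
  sInf {x : ℝ≥0∞ | ∃ π, ∃ g ∈ ts.goal, ts.IsPathFrom s π g ∧ x = (ts.pathCost π : ℝ≥0∞)}

/-- `g*`: minimal cost of a path from the initial state to `s` (`∞` if none exists). -/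
noncomputable def gstar (ts : TransSys S L) (s : S) : ℝ≥0∞ :=
  sInf {x : ℝ≥0∞ | ∃ π, ts.IsPathFrom ts.init π s ∧ x = (ts.pathCost π : ℝ≥0∞)}

end TransSys

/-! ## Information sources and dynamic heuristics -/

/-- An information source for a transition system (Definition 1). -/
structure InfoSource {S L : Type} (ts : TransSys S L) (I : Type) where
  initInfo : I
  update : I → Tran S L → I
  refine : I → S → I

namespace InfoSource

variable {S L I : Type} {ts : TransSys S L}

/-- `ReachWith σ i K`: information object `i` is obtained from the initial
information by updates/refinements, where `K` is the set consisting of the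
initial state together with all targets of used transitions, every refined state
lies in `K`, and the origin of every used transition lies in `K` (Definition 2). -/
inductive ReachWith (σ : InfoSource ts I) : I → Set S → Prop
  | base : ReachWith σ σ.initInfo {ts.init}
  | update {i : I} {K : Set S} {t : Tran S L} :
      ReachWith σ i K → t ∈ ts.trans → t.1 ∈ K →
      ReachWith σ (σ.update i t) (insert t.2.2 K)
  | refine {i : I} {K : Set S} {s : S} :
      ReachWith σ i K → s ∈ K → ReachWith σ (σ.refine i s) K

/-- An information object is reachable (Definition 2). -/
def ReachableInfo (σ : InfoSource ts I) (i : I) : Prop := ∃ K, σ.ReachWith i K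

end InfoSource

section HeuristicProps

variable {S L I : Type} (ts : TransSys S L) (σ : InfoSource ts I) (h : S → I → ℝ≥0∞)

def DynSafe : Prop := ∀ (s : S) (i : I), σ.ReachableInfo i → h s i = ⊤ → ts.hstar s = ⊤

def DynAdmissible : Prop := ∀ (s : S) (i : I), σ.ReachableInfo i → h s i ≤ ts.hstar s

def DynConsistent : Prop :=
  ∀ t ∈ ts.trans, ∀ i : I, σ.ReachableInfo i →
    h t.1 i ≤ (ts.cost t.2.1 : ℝ≥0∞) + h t.2.2 i

def DynGoalAware : Prop := ∀ s ∈ ts.goal, ∀ i : I, σ.ReachableInfo i → h s i = 0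

def DynMonotonic : Prop :=
  ∀ i : I, σ.ReachableInfo i →
    (∀ s : S, ∀ t ∈ ts.trans, h s i ≤ h s (σ.update i t)) ∧
    (∀ s s' : S, h s i ≤ h s (σ.refine i s'))

end HeuristicProps

/-! ## Progression sources -/

/-- A progression source (Definition 5). -/
structure ProgSource {S L : Type} (ts : TransSys S L) (J : Type) where
  initJ : J
  progress : J → Tran S L → J
  merge : J → J → J

/-- The progression-based information source built on a progression source
(Definition 7): per-state information, updated by progressing along a
transition and merging with existing information at the target. -/
noncomputable def progInfoSource {S L J : Type} (ts : TransSys S L) (p : ProgSource ts J) :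
    InfoSource ts (S → Option J) where
  initInfo := fun x => if x = ts.init then some p.initJ else none
  update := fun i t => fun x =>
    if x = t.2.2 then
      match i t.1 with
      | none => i t.2.2
      | some j =>
        match i t.2.2 with
        | none => some (p.progress j t)
        | some j' => some (p.merge (p.progress j t) j')
    else i x
  refine := fun i _ => i

/-- The parent source (Definition 6): per-state `g`-values and parent pointers. -/
noncomputable def parentSource {S L : Type} (ts : TransSys S L) :
    ProgSource ts (NNReal × Option (Tran S L)) where
  initJ := (0, none)
  progress := fun j t => (j.1 + ts.cost t.2.1, some t)
  merge := fun a b => if a.1 ≤ b.1 then a else b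

/-- `ParentChain par s π`: `π` is the sequence of transitions obtained by
following parent pointers backwards from `s` until a state whose stored
pointer is `⊥` (read forwards). -/
inductive ParentChain {S L : Type} (par : S → Option (NNReal × Option (Tran S L))) :
    S → List (Tran S L) → Prop
  | nil {s : S} {g : NNReal} : par s = some (g, none) → ParentChain par s []
  | cons {g : NNReal} {t : Tran S L} {π : List (Tran S L)} :
      par t.2.2 = some (g, some t) → ParentChain par t.1 π →
      ParentChain par t.2.2 (π ++ [t])

/-! ## The dynamic heuristic search framework (Algorithm 1) -/

/-- A configuration of the framework: the known states and one information
object per information source. -/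
structure FConfig (S : Type) {ι : Type} (I : ι → Type) where
  known : Set S
  infos : ∀ k, I k

/-- The (non-terminating) operations of the framework. -/
inductive FOp where
  | genUnknown
  | genKnown
  | refineOp
deriving DecidableEq

section Framework

variable {S L ι : Type} {I : ι → Type} (ts : TransSys S L) (σ : ∀ k, InfoSource ts (I k))

/-- One step of the framework, labeled by the operation performed. -/
inductive FStep : FConfig S I → FOp → FConfig S I → Prop
  | genUnknown {c : FConfig S I} {t : Tran S L} :
      t ∈ ts.trans → t.1 ∈ c.known → t.2.2 ∉ c.known →
      FStep c .genUnknown ⟨insert t.2.2 c.known, fun k => (σ k).update (c.infos k) t⟩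
  | genKnown {c : FConfig S I} {t : Tran S L} :
      t ∈ ts.trans → t.1 ∈ c.known → t.2.2 ∈ c.known →
      FStep c .genKnown ⟨c.known, fun k => (σ k).update (c.infos k) t⟩
  | refineStep {c : FConfig S I} {s : S} :
      s ∈ c.known →
      FStep c .refineOp ⟨c.known, fun k => (σ k).refine (c.infos k) s⟩

/-- The initial configuration of the framework. -/
def initFConfig : FConfig S I := ⟨{ts.init}, fun k => (σ k).initInfo⟩

/-- A configuration occurring in some finite execution of the framework. -/
def FReach (c : FConfig S I) : Prop :=
  Relation.ReflTransGen (fun a b => ∃ op, FStep ts σ a op b) (initFConfig ts σ) c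

/-- Applicability of the gen-unknown operation. -/
def GenUnknownApp (c : FConfig S I) : Prop :=
  ∃ t ∈ ts.trans, t.1 ∈ c.known ∧ t.2.2 ∉ c.known

/-- Applicability of decl-solvable: a goal state is known. -/
def DeclSolvableApp (c : FConfig S I) : Prop := ∃ s ∈ c.known, s ∈ ts.goal

/-- Applicability of decl-unsolvable: no goal state is known and
no transition leaves the known states. -/
def DeclUnsolvableApp (c : FConfig S I) : Prop :=
  (∀ s ∈ c.known, s ∉ ts.goal) ∧ ¬ GenUnknownApp ts c

end Framework

/-! ## dynA* (Algorithm 2) -/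

/-- An open-list entry: (state, g-entry, h-entry). -/
abbrev Entry (S : Type) := S × NNReal × ℝ≥0∞

/-- The f-value of an open-list entry. -/
noncomputable def fval {S : Type} (en : Entry S) : ℝ≥0∞ := (en.2.1 : ℝ≥0∞) + en.2.2

/-- A configuration of dynA*: known states, closed set, open queue, the parent
information (g-values and parent pointers, i.e. the information of σ_p) and the
information object of the heuristic's source σ_h. -/
structure AConfig (S L I : Type) where
  known : Set S
  closed : Set S
  openq : Multiset (Entry S)
  par : S → Option (NNReal × Option (Tran S L))
  info : I

/-- The g-value currently stored for a state. -/
noncomputable def gOf {S L I : Type} (c : AConfig S L I) (s : S) : NNReal :=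
  ((c.par s).map Prod.fst).getD 0

section DynAStar

variable {S L I : Type} (ts : TransSys S L) (σh : InfoSource ts I) (h : S → I → ℝ≥0∞)

/-- Updating the parent information along a transition `t` (the update of the
progression-based parent source σ_p): the target's pair becomes
`(g(origin)+cost, t)` unless the previously stored g-value is smaller. -/
noncomputable def parUpd (par : S → Option (NNReal × Option (Tran S L))) (t : Tran S L) :
    S → Option (NNReal × Option (Tran S L)) := fun x =>
  if x = t.2.2 then
    match par t.1 with
    | none => par t.2.2
    | some (g, _) =>
      match par t.2.2 with
      | none => some (g + ts.cost t.2.1, some t)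
      | some (g', p') =>
          if g + ts.cost t.2.1 ≤ g' then some (g + ts.cost t.2.1, some t)
          else some (g', p')
  else par x

/-- Processing one successor transition `t = (s, ℓ, s')` during the expansion of
`s`: record the old g-value (undefined iff `s'` unknown), update both information
objects along `t`, add `s'` to the known states, and insert `(s', g(s'), h(s'))`
into the open queue if `h(s') < ∞` and `s'` is new or reached more cheaply
(removing `s'` from closed in the latter case: reopening). -/
noncomputable def procSucc (c : AConfig S L I) (t : Tran S L) : AConfig S L I :=
  let oldg : Option NNReal := if t.2.2 ∈ c.known then some (gOf c t.2.2) else none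
  let par' := parUpd ts c.par t
  let info' := σh.update c.info t
  let c' : AConfig S L I :=
    { known := insert t.2.2 c.known, closed := c.closed, openq := c.openq,
      par := par', info := info' }
  let gnew : NNReal := ((par' t.2.2).map Prod.fst).getD 0
  let hnew : ℝ≥0∞ := h t.2.2 info'
  if hnew = ⊤ then c'
  else
    match oldg with
    | none => { c' with openq := (t.2.2, gnew, hnew) ::ₘ c.openq }
    | some go =>
      if gnew < go then
        { c' with closed := c.closed \ {t.2.2},
                  openq := (t.2.2, gnew, hnew) ::ₘ c.openq }
      else c'

/-- Expanding a state: process all its successor transitions in order. -/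
noncomputable def expandAll (c : AConfig S L I) (l : List (Tran S L)) : AConfig S L I :=
  l.foldl (procSucc ts σh h) c

/-- `l` enumerates (without repetition) exactly the transitions with origin `s`. -/
def SuccList (s : S) (l : List (Tran S L)) : Prop :=
  l.Nodup ∧ ∀ t : Tran S L, t ∈ l ↔ t ∈ ts.trans ∧ t.1 = s

/-- Labels recording what happened in one iteration of dynA*. -/
inductive ALab (S L : Type) where
  | dup (en : Entry S)
  | reev (en : Entry S)
  | expand (en : Entry S)
  | retGoal (en : Entry S) (π : List (Tran S L))
  | unsolv

/-- The entry popped from the open queue in an iteration, if any. -/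
def popped {S L : Type} : ALab S L → Option (Entry S)
  | .dup en => some en
  | .reev en => some en
  | .expand en => some en
  | .retGoal en _ => some en
  | .unsolv => none

/-- The outcome of one iteration of dynA*. -/
inductive AOut (S L I : Type) where
  | cont (c : AConfig S L I)
  | retPath (π : List (Tran S L))
  | unsolvable

/-- One iteration of dynA* (Algorithm 2), with optional re-evaluation.
An entry of minimal f-value is popped; duplicates (closed states) are discarded;
otherwise both information objects are refined on the popped state (σ_p's refine
is the identity, so `par` is unchanged); with `reeval` set, a state whose
heuristic value increased is re-inserted instead of expanded; expanding a goal
state returns the path obtained by following parent pointers; expanding a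
non-goal state processes all its successor transitions. If the open queue is
empty, 'unsolvable' is returned. -/
inductive AStep (reeval : Bool) : AConfig S L I → ALab S L → AOut S L I → Prop
  | dup {c : AConfig S L I} {en : Entry S} {rest : Multiset (Entry S)} :
      c.openq = en ::ₘ rest → (∀ en' ∈ c.openq, fval en ≤ fval en') →
      en.1 ∈ c.closed →
      AStep reeval c (.dup en) (.cont { c with openq := rest })
  | reevFin {c : AConfig S L I} {en : Entry S} {rest : Multiset (Entry S)} :
      c.openq = en ::ₘ rest → (∀ en' ∈ c.openq, fval en ≤ fval en') →
      en.1 ∉ c.closed → reeval = true →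
      en.2.2 < h en.1 (σh.refine c.info en.1) →
      h en.1 (σh.refine c.info en.1) ≠ ⊤ →
      AStep reeval c (.reev en)
        (.cont { c with info := σh.refine c.info en.1,
                        openq := (en.1, gOf c en.1, h en.1 (σh.refine c.info en.1)) ::ₘ rest })
  | reevInf {c : AConfig S L I} {en : Entry S} {rest : Multiset (Entry S)} :
      c.openq = en ::ₘ rest → (∀ en' ∈ c.openq, fval en ≤ fval en') →
      en.1 ∉ c.closed → reeval = true →
      en.2.2 < h en.1 (σh.refine c.info en.1) →
      h en.1 (σh.refine c.info en.1) = ⊤ →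
      AStep reeval c (.reev en)
        (.cont { c with info := σh.refine c.info en.1, openq := rest })
  | retGoal {c : AConfig S L I} {en : Entry S} {rest : Multiset (Entry S)}
      {π : List (Tran S L)} :
      c.openq = en ::ₘ rest → (∀ en' ∈ c.openq, fval en ≤ fval en') →
      en.1 ∉ c.closed →
      ¬(reeval = true ∧ en.2.2 < h en.1 (σh.refine c.info en.1)) →
      en.1 ∈ ts.goal → ParentChain c.par en.1 π →
      AStep reeval c (.retGoal en π) (.retPath π)
  | expand {c : AConfig S L I} {en : Entry S} {rest : Multiset (Entry S)}
      {l : List (Tran S L)} :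
      c.openq = en ::ₘ rest → (∀ en' ∈ c.openq, fval en ≤ fval en') →
      en.1 ∉ c.closed →
      ¬(reeval = true ∧ en.2.2 < h en.1 (σh.refine c.info en.1)) →
      en.1 ∉ ts.goal → SuccList ts en.1 l →
      AStep reeval c (.expand en)
        (.cont (expandAll ts σh h
          { c with openq := rest, closed := insert en.1 c.closed,
                   info := σh.refine c.info en.1 } l))
  | unsolv {c : AConfig S L I} :
      c.openq = 0 → AStep reeval c .unsolv .unsolvable

/-- The initial configuration of dynA*. -/
noncomputable def initAConfig : AConfig S L I where
  known := {ts.init}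
  closed := ∅
  openq :=
    if h ts.init σh.initInfo = ⊤ then 0 else {(ts.init, 0, h ts.init σh.initInfo)}
  par := fun x => if x = ts.init then some (0, none) else none
  info := σh.initInfo

/-- `IsExec ts σh h reeval e lab N`: `e 0, …, e N` are the configurations at the
beginnings of the iterations of an execution of dynA*, with `lab n` recording what
happened in iteration `n`. -/
def IsExec (reeval : Bool) (e : ℕ → AConfig S L I) (lab : ℕ → ALab S L) (N : ℕ) : Prop :=
  e 0 = initAConfig ts σh h ∧
  ∀ n < N, AStep ts σh h reeval (e n) (lab n) (.cont (e (n + 1)))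

/-- A state `s` is settled at iteration `n` if it was expanded in some earlier
iteration at whose beginning its stored g-value was `g*(s)`. -/
def SettledAt (e : ℕ → AConfig S L I) (lab : ℕ → ALab S L) (n : ℕ) (s : S) : Prop :=
  ∃ m < n, ∃ en : Entry S, lab m = .expand en ∧ en.1 = s ∧
    (gOf (e m) s : ℝ≥0∞) = ts.gstar s

/-- Iterated refinement of an information object on a fixed state. -/
def refIter (i : I) (s : S) : ℕ → I
  | 0 => i
  | n + 1 => σh.refine (refIter i s n) s

end DynAStar

/-! ## Auxiliary development for Statement 14 -/

/-- The g-value stored in an optional parent pair. -/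
noncomputable def gval {S L : Type} (o : Option (NNReal × Option (Tran S L))) : NNReal :=
  (o.map Prod.fst).getD 0

section Stmt14Aux

variable {S L I : Type} {ts : TransSys S L} {σh : InfoSource ts I} {h : S → I → ℝ≥0∞}

lemma gOf_eq_gval (c : AConfig S L I) (s : S) : gOf c s = gval (c.par s) := rfl

lemma parUpd_ne (par : S → Option (NNReal × Option (Tran S L))) (t : Tran S L)
    {x : S} (hx : x ≠ t.2.2) : parUpd ts par t x = par x := by
  simp [parUpd, hx]

lemma parUpd_origin_none {par : S → Option (NNReal × Option (Tran S L))} {t : Tran S L}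
    (hpo : par t.1 = none) : parUpd ts par t = par := by
  funext x
  by_cases hx : x = t.2.2
  · subst hx; simp [parUpd, hpo]
  · exact parUpd_ne par t hx

lemma parUpd_tgt_none {par : S → Option (NNReal × Option (Tran S L))} {t : Tran S L}
    {g1 : NNReal} {p1 : Option (Tran S L)}
    (hpo : par t.1 = some (g1, p1)) (hpt : par t.2.2 = none) :
    parUpd ts par t t.2.2 = some (g1 + ts.cost t.2.1, some t) := by
  simp [parUpd, hpo, hpt]

lemma parUpd_tgt_some {par : S → Option (NNReal × Option (Tran S L))} {t : Tran S L}
    {g1 g' : NNReal} {p1 p' : Option (Tran S L)}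
    (hpo : par t.1 = some (g1, p1)) (hpt : par t.2.2 = some (g', p')) :
    parUpd ts par t t.2.2 =
      if g1 + ts.cost t.2.1 ≤ g' then some (g1 + ts.cost t.2.1, some t)
      else some (g', p') := by
  simp [parUpd, hpo, hpt]

lemma gval_parUpd_origin (par : S → Option (NNReal × Option (Tran S L))) (t : Tran S L) :
    gval (parUpd ts par t t.1) = gval (par t.1) := by
  by_cases hx : t.1 = t.2.2
  · rcases hpo : par t.1 with _ | ⟨g1, p1⟩
    · rw [parUpd_origin_none hpo, hpo]
    · have hpt : par t.2.2 = some (g1, p1) := by rw [← hx, hpo]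
      rw [hx, parUpd_tgt_some hpo hpt]
      split
      · next hle =>
        have hc0 : g1 + ts.cost t.2.1 = g1 := le_antisymm hle (le_add_right le_rfl)
        simp [gval, hc0, hpt]
      · simp [gval, hpt]
  · rw [parUpd_ne par t hx]

lemma parUpd_tgt_isSome {par : S → Option (NNReal × Option (Tran S L))} {t : Tran S L}
    {g1 : NNReal} {p1 : Option (Tran S L)} (hpo : par t.1 = some (g1, p1)) :
    (parUpd ts par t t.2.2).isSome := by
  rcases hpt : par t.2.2 with _ | ⟨g', p'⟩
  · rw [parUpd_tgt_none hpo hpt]; rfl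
  · rw [parUpd_tgt_some hpo hpt]; split <;> rfl

lemma gval_parUpd_le {par : S → Option (NNReal × Option (Tran S L))} {t : Tran S L}
    {g1 g' : NNReal} {p1 p' : Option (Tran S L)}
    (hpo : par t.1 = some (g1, p1)) (hpt : par t.2.2 = some (g', p')) :
    gval (parUpd ts par t t.2.2) ≤ g' := by
  rw [parUpd_tgt_some hpo hpt]
  split
  · next hle => exact hle
  · exact le_rfl

lemma gval_parUpd_ins_unknown {par : S → Option (NNReal × Option (Tran S L))} {t : Tran S L}
    {g1 : NNReal} {p1 : Option (Tran S L)}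
    (hpo : par t.1 = some (g1, p1)) (hpt : par t.2.2 = none) :
    gval (parUpd ts par t t.2.2) = g1 + ts.cost t.2.1 := by
  rw [parUpd_tgt_none hpo hpt]; rfl

lemma gval_parUpd_ins_known {par : S → Option (NNReal × Option (Tran S L))} {t : Tran S L}
    {g1 g' : NNReal} {p1 p' : Option (Tran S L)}
    (hpo : par t.1 = some (g1, p1)) (hpt : par t.2.2 = some (g', p'))
    (hlt : gval (parUpd ts par t t.2.2) < g') :
    gval (parUpd ts par t t.2.2) = g1 + ts.cost t.2.1 := by
  by_cases hle : g1 + ts.cost t.2.1 ≤ g'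
  · rw [parUpd_tgt_some hpo hpt, if_pos hle]; rfl
  · exfalso
    rw [parUpd_tgt_some hpo hpt, if_neg hle] at hlt
    exact lt_irrefl g' hlt

end Stmt14Aux
/-- The main invariant of dynA* configurations used for Statement 14. -/
structure S14Inv {S L I : Type} (ts : TransSys S L) (σh : InfoSource ts I)
    (h : S → I → ℝ≥0∞) (c : AConfig S L I) : Prop where
  reach : σh.ReachWith c.info c.known
  knownPar : ∀ s, s ∈ c.known ↔ (c.par s).isSome
  entKnown : ∀ en ∈ c.openq, en.1 ∈ c.known
  entH : ∀ en ∈ c.openq, en.2.2 ≤ h en.1 c.info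
  entHfin : ∀ en ∈ c.openq, en.2.2 ≠ ⊤
  witness : ∀ en ∈ c.openq, en.1 ∉ c.closed → h en.1 c.info ≠ ⊤ →
    ∃ hv2, (en.1, gOf c en.1, hv2) ∈ c.openq

section Stmt14Aux2

variable {S L I : Type} {ts : TransSys S L} {σh : InfoSource ts I} {h : S → I → ℝ≥0∞}

lemma procSucc_eq_top (c : AConfig S L I) (t : Tran S L)
    (htop : h t.2.2 (σh.update c.info t) = ⊤) :
    procSucc ts σh h c t =
      ⟨insert t.2.2 c.known, c.closed, c.openq, parUpd ts c.par t, σh.update c.info t⟩ := by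
  simp [procSucc, htop]

lemma procSucc_eq_unknown (c : AConfig S L I) (t : Tran S L)
    (htop : h t.2.2 (σh.update c.info t) ≠ ⊤) (hk : t.2.2 ∉ c.known) :
    procSucc ts σh h c t =
      ⟨insert t.2.2 c.known, c.closed,
        (t.2.2, gval (parUpd ts c.par t t.2.2), h t.2.2 (σh.update c.info t)) ::ₘ c.openq,
        parUpd ts c.par t, σh.update c.info t⟩ := by
  simp [procSucc, htop, hk, gval]; rfl

lemma procSucc_eq_reopen (c : AConfig S L I) (t : Tran S L)
    (htop : h t.2.2 (σh.update c.info t) ≠ ⊤) (hk : t.2.2 ∈ c.known)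
    (hlt : gval (parUpd ts c.par t t.2.2) < gOf c t.2.2) :
    procSucc ts σh h c t =
      ⟨insert t.2.2 c.known, c.closed \ {t.2.2},
        (t.2.2, gval (parUpd ts c.par t t.2.2), h t.2.2 (σh.update c.info t)) ::ₘ c.openq,
        parUpd ts c.par t, σh.update c.info t⟩ := by
  simp only [procSucc, gval] at *
  simp [htop, hk, hlt]

lemma procSucc_eq_keep (c : AConfig S L I) (t : Tran S L)
    (htop : h t.2.2 (σh.update c.info t) ≠ ⊤) (hk : t.2.2 ∈ c.known)
    (hnlt : ¬ gval (parUpd ts c.par t t.2.2) < gOf c t.2.2) :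
    procSucc ts σh h c t =
      ⟨insert t.2.2 c.known, c.closed, c.openq, parUpd ts c.par t, σh.update c.info t⟩ := by
  simp only [procSucc, gval] at *
  simp [htop, hk, hnlt]

lemma procSucc_fields (c : AConfig S L I) (t : Tran S L) :
    (procSucc ts σh h c t).known = insert t.2.2 c.known ∧
    (procSucc ts σh h c t).par = parUpd ts c.par t ∧
    (procSucc ts σh h c t).info = σh.update c.info t := by
  by_cases htop : h t.2.2 (σh.update c.info t) = ⊤
  · rw [procSucc_eq_top c t htop]; exact ⟨rfl, rfl, rfl⟩
  · by_cases hk : t.2.2 ∈ c.known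
    · by_cases hlt : gval (parUpd ts c.par t t.2.2) < gOf c t.2.2
      · rw [procSucc_eq_reopen c t htop hk hlt]; exact ⟨rfl, rfl, rfl⟩
      · rw [procSucc_eq_keep c t htop hk hlt]; exact ⟨rfl, rfl, rfl⟩
    · rw [procSucc_eq_unknown c t htop hk]; exact ⟨rfl, rfl, rfl⟩

end Stmt14Aux2
section Stmt14Aux3

variable {S L I : Type} {ts : TransSys S L} {σh : InfoSource ts I} {h : S → I → ℝ≥0∞}

lemma inv_init : S14Inv ts σh h (initAConfig ts σh h) := by
  have hq : ∀ en : Entry S, en ∈ (initAConfig ts σh h).openq →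
      en = (ts.init, 0, h ts.init σh.initInfo) ∧ h ts.init σh.initInfo ≠ ⊤ := by
    intro en hen
    by_cases h0 : h ts.init σh.initInfo = ⊤
    · simp [initAConfig, h0] at hen
    · simp [initAConfig, h0] at hen
      exact ⟨hen, h0⟩
  constructor
  · exact InfoSource.ReachWith.base
  · intro s; by_cases hs : s = ts.init <;> simp [initAConfig, hs]
  · intro en hen; rcases hq en hen with ⟨rfl, -⟩; simp [initAConfig]
  · intro en hen; rcases hq en hen with ⟨rfl, -⟩; exact le_rfl
  · intro en hen; rcases hq en hen with ⟨rfl, hne⟩; exact hne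
  · intro en hen hncl hhn
    rcases hq en hen with ⟨rfl, hne⟩
    refine ⟨h ts.init σh.initInfo, ?_⟩
    have hg : gOf (initAConfig ts σh h) ts.init = 0 := by
      simp [initAConfig, gOf_eq_gval, gval] <;> rfl
    show (ts.init, gOf (initAConfig ts σh h) ts.init, h ts.init σh.initInfo)
        ∈ (initAConfig ts σh h).openq
    rw [hg]
    exact hen

lemma par_none_of_unknown {c : AConfig S L I} (hc : S14Inv ts σh h c) {s : S}
    (hk : s ∉ c.known) : c.par s = none := by
  rcases hq : c.par s with _ | v
  · rfl
  · exact absurd ((hc.knownPar s).mpr (by simp [hq])) hk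

lemma key_bound {c : AConfig S L I} {en : Entry S} (hc : S14Inv ts σh h c)
    (hmin : ∀ en' ∈ c.openq, fval en ≤ fval en') (hmem : en ∈ c.openq)
    (hncl : en.1 ∉ c.closed) :
    fval en ≤ (gOf c en.1 : ℝ≥0∞) + h en.1 c.info := by
  by_cases htop : h en.1 c.info = ⊤
  · simp [htop]
  · obtain ⟨hv2, hw⟩ := hc.witness en hmem hncl htop
    have h2 : hv2 ≤ h en.1 c.info := hc.entH _ hw
    calc fval en ≤ fval (en.1, gOf c en.1, hv2) := hmin _ hw
      _ = (gOf c en.1 : ℝ≥0∞) + hv2 := rfl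
      _ ≤ _ := add_le_add_right h2 _

lemma procSucc_inv (hmono : DynMonotonic ts σh h) {c : AConfig S L I} {t : Tran S L}
    (hc : S14Inv ts σh h c) (ht : t ∈ ts.trans) (hk1 : t.1 ∈ c.known) :
    S14Inv ts σh h (procSucc ts σh h c t) := by
  have hri : σh.ReachableInfo c.info := ⟨c.known, hc.reach⟩
  have hmU : ∀ s, h s c.info ≤ h s (σh.update c.info t) := fun s => (hmono _ hri).1 s t ht
  have hreach' : σh.ReachWith (σh.update c.info t) (insert t.2.2 c.known) :=
    hc.reach.update ht hk1
  obtain ⟨⟨g1, p1⟩, hp1⟩ := Option.isSome_iff_exists.mp ((hc.knownPar t.1).mp hk1)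
  have hkp' : ∀ s, s ∈ insert t.2.2 c.known ↔ (parUpd ts c.par t s).isSome := by
    intro s
    by_cases hs : s = t.2.2
    · subst hs; simp [parUpd_tgt_isSome (ts := ts) hp1]
    · rw [parUpd_ne _ _ hs]; simp [hs, hc.knownPar s]
  have hoffg : ∀ x : S, x ≠ t.2.2 → gval (parUpd ts c.par t x) = gval (c.par x) := by
    intro x hx; rw [parUpd_ne _ _ hx]
  have hHne : ∀ s : S, h s (σh.update c.info t) ≠ ⊤ → h s c.info ≠ ⊤ := by
    intro s hne hcon
    exact hne (top_le_iff.mp (hcon ▸ hmU s))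
  by_cases htop : h t.2.2 (σh.update c.info t) = ⊤
  · rw [procSucc_eq_top c t htop]
    refine ⟨hreach', hkp', ?_, ?_, ?_, ?_⟩
    · intro en hen; exact Set.mem_insert_of_mem _ (hc.entKnown en hen)
    · intro en hen; exact le_trans (hc.entH en hen) (hmU en.1)
    · exact hc.entHfin
    · intro en hen hncl hhn
      have hne : en.1 ≠ t.2.2 := fun he => hhn (he ▸ htop)
      obtain ⟨hv2, hw⟩ := hc.witness en hen hncl (hHne _ hhn)
      refine ⟨hv2, ?_⟩
      show (en.1, gval (parUpd ts c.par t en.1), hv2) ∈ c.openq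
      rw [hoffg en.1 hne]
      exact hw
  · by_cases hk : t.2.2 ∈ c.known
    · obtain ⟨⟨g', p'⟩, hp'⟩ := Option.isSome_iff_exists.mp ((hc.knownPar t.2.2).mp hk)
      by_cases hlt : gval (parUpd ts c.par t t.2.2) < gOf c t.2.2
      · rw [procSucc_eq_reopen c t htop hk hlt]
        refine ⟨hreach', hkp', ?_, ?_, ?_, ?_⟩
        · intro en hen
          rcases Multiset.mem_cons.mp hen with rfl | hen'
          · exact Set.mem_insert _ _
          · exact Set.mem_insert_of_mem _ (hc.entKnown en hen')
        · intro en hen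
          rcases Multiset.mem_cons.mp hen with rfl | hen'
          · exact le_rfl
          · exact le_trans (hc.entH en hen') (hmU en.1)
        · intro en hen
          rcases Multiset.mem_cons.mp hen with rfl | hen'
          · exact htop
          · exact hc.entHfin en hen'
        · intro en hen hncl hhn
          by_cases hne : en.1 = t.2.2
          · refine ⟨h t.2.2 (σh.update c.info t), ?_⟩
            rw [hne]
            exact Multiset.mem_cons_self _ _
          · have hen' : en ∈ c.openq := by
              rcases Multiset.mem_cons.mp hen with rfl | hen'
              · exact absurd rfl hne
              · exact hen'
            have hncl' : en.1 ∉ c.closed := by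
              intro hco
              exact hncl ⟨hco, by simpa using hne⟩
            obtain ⟨hv2, hw⟩ := hc.witness en hen' hncl' (hHne _ hhn)
            refine ⟨hv2, Multiset.mem_cons_of_mem ?_⟩
            show (en.1, gval (parUpd ts c.par t en.1), hv2) ∈ c.openq
            rw [hoffg en.1 hne]; exact hw
      · rw [procSucc_eq_keep c t htop hk hlt]
        have hgeq : gval (parUpd ts c.par t t.2.2) = gOf c t.2.2 := by
          have h1 : gval (parUpd ts c.par t t.2.2) ≤ g' := gval_parUpd_le hp1 hp'
          have h2 : gOf c t.2.2 = g' := by simp [gOf_eq_gval, hp', gval] <;> rfl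
          exact le_antisymm (h2 ▸ h1) (not_lt.mp hlt)
        refine ⟨hreach', hkp', ?_, ?_, ?_, ?_⟩
        · intro en hen; exact Set.mem_insert_of_mem _ (hc.entKnown en hen)
        · intro en hen; exact le_trans (hc.entH en hen) (hmU en.1)
        · exact hc.entHfin
        · intro en hen hncl hhn
          obtain ⟨hv2, hw⟩ := hc.witness en hen hncl (hHne _ hhn)
          refine ⟨hv2, ?_⟩
          show (en.1, gval (parUpd ts c.par t en.1), hv2) ∈ c.openq
          by_cases hne : en.1 = t.2.2
          · rw [hne, hgeq]
            rw [hne] at hw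
            exact hw
          · rw [hoffg en.1 hne]; exact hw
    · have hpt : c.par t.2.2 = none := par_none_of_unknown hc hk
      rw [procSucc_eq_unknown c t htop hk]
      refine ⟨hreach', hkp', ?_, ?_, ?_, ?_⟩
      · intro en hen
        rcases Multiset.mem_cons.mp hen with rfl | hen'
        · exact Set.mem_insert _ _
        · exact Set.mem_insert_of_mem _ (hc.entKnown en hen')
      · intro en hen
        rcases Multiset.mem_cons.mp hen with rfl | hen'
        · exact le_rfl
        · exact le_trans (hc.entH en hen') (hmU en.1)
      · intro en hen
        rcases Multiset.mem_cons.mp hen with rfl | hen'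
        · exact htop
        · exact hc.entHfin en hen'
      · intro en hen hncl hhn
        by_cases hne : en.1 = t.2.2
        · exact ⟨h t.2.2 (σh.update c.info t), by rw [hne]; exact Multiset.mem_cons_self _ _⟩
        · have hen' : en ∈ c.openq := by
            rcases Multiset.mem_cons.mp hen with rfl | hen'
            · exact absurd rfl hne
            · exact hen'
          obtain ⟨hv2, hw⟩ := hc.witness en hen' hncl (hHne _ hhn)
          refine ⟨hv2, Multiset.mem_cons_of_mem ?_⟩
          show (en.1, gval (parUpd ts c.par t en.1), hv2) ∈ c.openq
          rw [hoffg en.1 hne]; exact hw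

lemma procSucc_fnew {c : AConfig S L I} {t : Tran S L}
    (hc : S14Inv ts σh h c) (hk1 : t.1 ∈ c.known) :
    ∀ en' ∈ (procSucc ts σh h c t).openq, en' ∈ c.openq ∨
      fval en' = ((gOf c t.1 : ℝ≥0∞) + (ts.cost t.2.1 : ℝ≥0∞)) + h t.2.2 (σh.update c.info t) := by
  obtain ⟨⟨g1, p1⟩, hp1⟩ := Option.isSome_iff_exists.mp ((hc.knownPar t.1).mp hk1)
  have hg1 : gOf c t.1 = g1 := by simp [gOf_eq_gval, hp1, gval] <;> rfl
  by_cases htop : h t.2.2 (σh.update c.info t) = ⊤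
  · rw [procSucc_eq_top c t htop]; intro en' hen'; exact Or.inl hen'
  · by_cases hk : t.2.2 ∈ c.known
    · obtain ⟨⟨g', p'⟩, hp'⟩ := Option.isSome_iff_exists.mp ((hc.knownPar t.2.2).mp hk)
      by_cases hlt : gval (parUpd ts c.par t t.2.2) < gOf c t.2.2
      · rw [procSucc_eq_reopen c t htop hk hlt]
        intro en' hen'
        rcases Multiset.mem_cons.mp hen' with rfl | hen''
        · right
          have hg2 : gOf c t.2.2 = g' := by simp [gOf_eq_gval, hp', gval] <;> rfl
          have hv := gval_parUpd_ins_known hp1 hp' (hg2 ▸ hlt)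
          simp [fval, hv, hg1, ENNReal.coe_add, add_assoc]
        · exact Or.inl hen''
      · rw [procSucc_eq_keep c t htop hk hlt]; intro en' hen'; exact Or.inl hen'
    · have hpt : c.par t.2.2 = none := par_none_of_unknown hc hk
      rw [procSucc_eq_unknown c t htop hk]
      intro en' hen'
      rcases Multiset.mem_cons.mp hen' with rfl | hen''
      · right
        have hv := gval_parUpd_ins_unknown (ts := ts) hp1 hpt
        simp [fval, hv, hg1, ENNReal.coe_add, add_assoc]
      · exact Or.inl hen''

end Stmt14Aux3
/-- Invariant maintained while expanding the successors of the popped entry `en`. -/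
structure S14EInv {S L I : Type} (ts : TransSys S L) (σh : InfoSource ts I)
    (h : S → I → ℝ≥0∞) (c0 : AConfig S L I) (en : Entry S) (d : AConfig S L I) : Prop where
  inv : S14Inv ts σh h d
  kn : en.1 ∈ d.known
  g0 : gOf d en.1 = gOf c0 en.1
  hm : h en.1 c0.info ≤ h en.1 d.info
  bd : ∀ en' ∈ d.openq, fval en ≤ fval en'

section Stmt14Aux4

variable {S L I : Type} {ts : TransSys S L} {σh : InfoSource ts I} {h : S → I → ℝ≥0∞}

lemma einv_step (hmono : DynMonotonic ts σh h) (hcons : DynConsistent ts σh h)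
    {c0 d : AConfig S L I} {en : Entry S} {t : Tran S L}
    (key : fval en ≤ (gOf c0 en.1 : ℝ≥0∞) + h en.1 c0.info)
    (ht : t ∈ ts.trans) (ht1 : t.1 = en.1)
    (hd : S14EInv ts σh h c0 en d) : S14EInv ts σh h c0 en (procSucc ts σh h d t) := by
  have hk1 : t.1 ∈ d.known := by rw [ht1]; exact hd.kn
  obtain ⟨hkE, hpE, hiE⟩ := procSucc_fields (ts := ts) (σh := σh) (h := h) d t
  have hriU : σh.ReachableInfo (σh.update d.info t) := ⟨_, hd.inv.reach.update ht hk1⟩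
  have hrid : σh.ReachableInfo d.info := ⟨_, hd.inv.reach⟩
  have hmU : ∀ s, h s d.info ≤ h s (σh.update d.info t) := fun s => (hmono _ hrid).1 s t ht
  refine ⟨procSucc_inv hmono hd.inv ht hk1, ?_, ?_, ?_, ?_⟩
  · rw [hkE]; exact Set.mem_insert_of_mem _ hd.kn
  · rw [gOf_eq_gval, hpE, ← ht1, gval_parUpd_origin, ← gOf_eq_gval, ht1, hd.g0]
  · rw [hiE]; exact le_trans hd.hm (hmU en.1)
  · intro en' hen'
    rcases procSucc_fnew hd.inv hk1 en' hen' with hold | hnew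
    · exact hd.bd en' hold
    · rw [hnew]
      have hco : h t.1 (σh.update d.info t) ≤
          (ts.cost t.2.1 : ℝ≥0∞) + h t.2.2 (σh.update d.info t) := hcons t ht _ hriU
      calc fval en ≤ (gOf c0 en.1 : ℝ≥0∞) + h en.1 c0.info := key
        _ = (gOf d t.1 : ℝ≥0∞) + h en.1 c0.info := by rw [ht1, hd.g0]
        _ ≤ (gOf d t.1 : ℝ≥0∞) + h en.1 d.info := add_le_add_right hd.hm _
        _ ≤ (gOf d t.1 : ℝ≥0∞) + h t.1 (σh.update d.info t) := by
            rw [ht1]; exact add_le_add_right (hmU en.1) _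
        _ ≤ (gOf d t.1 : ℝ≥0∞) + ((ts.cost t.2.1 : ℝ≥0∞) + h t.2.2 (σh.update d.info t)) :=
            add_le_add_right hco _
        _ = ((gOf d t.1 : ℝ≥0∞) + (ts.cost t.2.1 : ℝ≥0∞)) + h t.2.2 (σh.update d.info t) :=
            (add_assoc _ _ _).symm

lemma einv_fold (hmono : DynMonotonic ts σh h) (hcons : DynConsistent ts σh h)
    {c0 : AConfig S L I} {en : Entry S}
    (key : fval en ≤ (gOf c0 en.1 : ℝ≥0∞) + h en.1 c0.info) :
    ∀ (l : List (Tran S L)) (d : AConfig S L I),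
      (∀ t ∈ l, t ∈ ts.trans ∧ t.1 = en.1) →
      S14EInv ts σh h c0 en d → S14EInv ts σh h c0 en (expandAll ts σh h d l) := by
  intro l
  induction l with
  | nil => intro d _ hd; exact hd
  | cons t l ih =>
      intro d hl hd
      have ht := hl t List.mem_cons_self
      have hstep := einv_step hmono hcons key ht.1 ht.2 hd
      have heq : expandAll ts σh h d (t :: l) = expandAll ts σh h (procSucc ts σh h d t) l := rfl
      rw [heq]
      exact ih (procSucc ts σh h d t) (fun t' ht' => hl t' (List.mem_cons_of_mem _ ht')) hstep

lemma expand_einv (hmono : DynMonotonic ts σh h) (hcons : DynConsistent ts σh h)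
    {c : AConfig S L I} {en : Entry S} {rest : Multiset (Entry S)}
    {l : List (Tran S L)} (hc : S14Inv ts σh h c)
    (h1 : c.openq = en ::ₘ rest) (h2 : ∀ en' ∈ c.openq, fval en ≤ fval en')
    (h3 : en.1 ∉ c.closed) (hl : SuccList ts en.1 l) :
    S14EInv ts σh h c en (expandAll ts σh h
      { c with openq := rest, closed := insert en.1 c.closed,
               info := σh.refine c.info en.1 } l) := by
  have hmem : en ∈ c.openq := h1 ▸ Multiset.mem_cons_self _ _
  have hkn : en.1 ∈ c.known := hc.entKnown en hmem
  have hri : σh.ReachableInfo c.info := ⟨_, hc.reach⟩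
  have hmR : ∀ s, h s c.info ≤ h s (σh.refine c.info en.1) := fun s => (hmono _ hri).2 s en.1
  have key := key_bound hc h2 hmem h3
  have hrest : ∀ en' ∈ rest, en' ∈ c.openq := by
    intro en' he; rw [h1]; exact Multiset.mem_cons_of_mem he
  have hinv0 : S14Inv ts σh h
      { c with openq := rest, closed := insert en.1 c.closed,
               info := σh.refine c.info en.1 } := by
    constructor
    · exact hc.reach.refine hkn
    · exact hc.knownPar
    · intro en' hen'; exact hc.entKnown en' (hrest en' hen')
    · intro en' hen'; exact le_trans (hc.entH en' (hrest en' hen')) (hmR en'.1)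
    · intro en' hen'; exact hc.entHfin en' (hrest en' hen')
    · intro en' hen' hncl hhn
      have hne : en'.1 ≠ en.1 := fun he => hncl (he ▸ Set.mem_insert _ _)
      have hncl' : en'.1 ∉ c.closed := fun hco => hncl (Set.mem_insert_of_mem _ hco)
      have hhn' : h en'.1 c.info ≠ ⊤ := fun hco => hhn (top_le_iff.mp (hco ▸ hmR en'.1))
      obtain ⟨hv2, hw⟩ := hc.witness en' (hrest en' hen') hncl' hhn'
      refine ⟨hv2, ?_⟩
      rw [h1] at hw
      rcases Multiset.mem_cons.mp hw with heq | hw'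
      · exact absurd (congrArg Prod.fst heq) hne
      · exact hw'
  exact einv_fold hmono hcons key l _ (fun t' ht' => (hl.2 t').mp ht')
    ⟨hinv0, hkn, rfl, hmR en.1, fun en' he => h2 en' (hrest en' he)⟩

lemma stepHead {reeval : Bool} {c : AConfig S L I} {lb : ALab S L} {o : AOut S L I}
    {en : Entry S} (hstep : AStep ts σh h reeval c lb o) (hpop : popped lb = some en) :
    en ∈ c.openq ∧ ∀ en' ∈ c.openq, fval en ≤ fval en' := by
  cases hstep with
  | dup h1 h2 h3 =>
      obtain rfl : _ = en := by simpa [popped] using hpop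
      exact ⟨h1 ▸ Multiset.mem_cons_self _ _, h2⟩
  | reevFin h1 h2 h3 h4 h5 h6 =>
      obtain rfl : _ = en := by simpa [popped] using hpop
      exact ⟨h1 ▸ Multiset.mem_cons_self _ _, h2⟩
  | reevInf h1 h2 h3 h4 h5 h6 =>
      obtain rfl : _ = en := by simpa [popped] using hpop
      exact ⟨h1 ▸ Multiset.mem_cons_self _ _, h2⟩
  | retGoal h1 h2 h3 h4 h5 h6 =>
      obtain rfl : _ = en := by simpa [popped] using hpop
      exact ⟨h1 ▸ Multiset.mem_cons_self _ _, h2⟩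
  | expand h1 h2 h3 h4 h5 h6 =>
      obtain rfl : _ = en := by simpa [popped] using hpop
      exact ⟨h1 ▸ Multiset.mem_cons_self _ _, h2⟩
  | unsolv h1 => simp [popped] at hpop

lemma stepCont {reeval : Bool} {c c' : AConfig S L I} {lb : ALab S L}
    (hstep : AStep ts σh h reeval c lb (.cont c')) :
    ∃ en, popped lb = some en := by
  cases hstep <;> exact ⟨_, rfl⟩

lemma stepInv (hmono : DynMonotonic ts σh h) (hcons : DynConsistent ts σh h)
    {reeval : Bool} {c c' : AConfig S L I} {lb : ALab S L}
    (hc : S14Inv ts σh h c) (hstep : AStep ts σh h reeval c lb (.cont c')) :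
    S14Inv ts σh h c' := by
  have hri : σh.ReachableInfo c.info := ⟨_, hc.reach⟩
  cases hstep with
  | dup h1 h2 h3 =>
      rename_i en rest
      constructor
      · exact hc.reach
      · exact hc.knownPar
      · intro en' hen'; exact hc.entKnown en' (h1 ▸ Multiset.mem_cons_of_mem hen')
      · intro en' hen'; exact hc.entH en' (h1 ▸ Multiset.mem_cons_of_mem hen')
      · intro en' hen'; exact hc.entHfin en' (h1 ▸ Multiset.mem_cons_of_mem hen')
      · intro en' hen' hncl hhn
        have hne : en'.1 ≠ en.1 := fun he => hncl (he ▸ h3)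
        obtain ⟨hv2, hw⟩ := hc.witness en' (h1 ▸ Multiset.mem_cons_of_mem hen') hncl hhn
        refine ⟨hv2, ?_⟩
        rw [h1] at hw
        rcases Multiset.mem_cons.mp hw with heq | hw'
        · exact absurd (congrArg Prod.fst heq) hne
        · exact hw'
  | reevFin h1 h2 h3 h4 h5 h6 =>
      rename_i en rest
      have hkn : en.1 ∈ c.known := hc.entKnown en (h1 ▸ Multiset.mem_cons_self _ _)
      have hmR : ∀ s, h s c.info ≤ h s (σh.refine c.info en.1) :=
        fun s => (hmono _ hri).2 s en.1
      constructor
      · exact hc.reach.refine hkn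
      · exact hc.knownPar
      · intro en' hen'
        rcases Multiset.mem_cons.mp hen' with rfl | hen''
        · exact hkn
        · exact hc.entKnown en' (h1 ▸ Multiset.mem_cons_of_mem hen'')
      · intro en' hen'
        rcases Multiset.mem_cons.mp hen' with rfl | hen''
        · exact le_rfl
        · exact le_trans (hc.entH en' (h1 ▸ Multiset.mem_cons_of_mem hen'')) (hmR en'.1)
      · intro en' hen'
        rcases Multiset.mem_cons.mp hen' with rfl | hen''
        · exact h6
        · exact hc.entHfin en' (h1 ▸ Multiset.mem_cons_of_mem hen'')
      · intro en' hen' hncl hhn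
        by_cases hne : en'.1 = en.1
        · refine ⟨h en.1 (σh.refine c.info en.1), ?_⟩
          rw [hne]
          exact Multiset.mem_cons_self _ _
        · have hen'' : en' ∈ rest := by
            rcases Multiset.mem_cons.mp hen' with rfl | hh
            · exact absurd rfl hne
            · exact hh
          have hhn' : h en'.1 c.info ≠ ⊤ := fun hco => hhn (top_le_iff.mp (hco ▸ hmR en'.1))
          obtain ⟨hv2, hw⟩ := hc.witness en' (h1 ▸ Multiset.mem_cons_of_mem hen'') hncl hhn'
          refine ⟨hv2, ?_⟩
          rw [h1] at hw
          rcases Multiset.mem_cons.mp hw with heq | hw'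
          · exact absurd (congrArg Prod.fst heq) hne
          · exact Multiset.mem_cons_of_mem hw'
  | reevInf h1 h2 h3 h4 h5 h6 =>
      rename_i en rest
      have hkn : en.1 ∈ c.known := hc.entKnown en (h1 ▸ Multiset.mem_cons_self _ _)
      have hmR : ∀ s, h s c.info ≤ h s (σh.refine c.info en.1) :=
        fun s => (hmono _ hri).2 s en.1
      constructor
      · exact hc.reach.refine hkn
      · exact hc.knownPar
      · intro en' hen'; exact hc.entKnown en' (h1 ▸ Multiset.mem_cons_of_mem hen')
      · intro en' hen';
        exact le_trans (hc.entH en' (h1 ▸ Multiset.mem_cons_of_mem hen')) (hmR en'.1)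
      · intro en' hen'; exact hc.entHfin en' (h1 ▸ Multiset.mem_cons_of_mem hen')
      · intro en' hen' hncl hhn
        have hne : en'.1 ≠ en.1 := fun he => hhn (by rw [he, h6])
        have hhn' : h en'.1 c.info ≠ ⊤ := fun hco => hhn (top_le_iff.mp (hco ▸ hmR en'.1))
        obtain ⟨hv2, hw⟩ := hc.witness en' (h1 ▸ Multiset.mem_cons_of_mem hen') hncl hhn'
        refine ⟨hv2, ?_⟩
        rw [h1] at hw
        rcases Multiset.mem_cons.mp hw with heq | hw'
        · exact absurd (congrArg Prod.fst heq) hne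
        · exact hw'
  | expand h1 h2 h3 h4 h5 h6 =>
      exact (expand_einv hmono hcons hc h1 h2 h3 h6).inv

lemma stepB (hmono : DynMonotonic ts σh h) (hcons : DynConsistent ts σh h)
    {reeval : Bool} {c c' : AConfig S L I} {lb : ALab S L}
    (hc : S14Inv ts σh h c) (hstep : AStep ts σh h reeval c lb (.cont c'))
    {en : Entry S} (hpop : popped lb = some en) :
    ∀ en' ∈ c'.openq, fval en ≤ fval en' := by
  have hri : σh.ReachableInfo c.info := ⟨_, hc.reach⟩
  cases hstep with
  | dup h1 h2 h3 =>
      obtain rfl : _ = en := by simpa [popped] using hpop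
      intro en' hen'
      exact h2 en' (h1 ▸ Multiset.mem_cons_of_mem hen')
  | reevFin h1 h2 h3 h4 h5 h6 =>
      rename_i en0 rest
      obtain rfl : en0 = en := by simpa [popped] using hpop
      intro en' hen'
      rcases Multiset.mem_cons.mp hen' with rfl | hen''
      · have key := key_bound hc h2 (h1 ▸ Multiset.mem_cons_self _ _) h3
        have hmR : h en0.1 c.info ≤ h en0.1 (σh.refine c.info en0.1) :=
          (hmono _ hri).2 en0.1 en0.1
        show fval en0 ≤ fval (en0.1, gOf c en0.1, h en0.1 (σh.refine c.info en0.1))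
        calc fval en0 ≤ (gOf c en0.1 : ℝ≥0∞) + h en0.1 c.info := key
          _ ≤ (gOf c en0.1 : ℝ≥0∞) + h en0.1 (σh.refine c.info en0.1) := add_le_add_right hmR _
      · exact h2 en' (h1 ▸ Multiset.mem_cons_of_mem hen'')
  | reevInf h1 h2 h3 h4 h5 h6 =>
      obtain rfl : _ = en := by simpa [popped] using hpop
      intro en' hen'
      exact h2 en' (h1 ▸ Multiset.mem_cons_of_mem hen')
  | expand h1 h2 h3 h4 h5 h6 =>
      obtain rfl : _ = en := by simpa [popped] using hpop
      exact (expand_einv hmono hcons hc h1 h2 h3 h6).bd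

end Stmt14Aux4

/-! ## Statement 14 -/


theorem stmt14 {S L I : Type} [Fintype S] [Fintype L]
    (ts : TransSys S L) (σh : InfoSource ts I) (h : S → I → ℝ≥0∞)
    (hadm : DynAdmissible ts σh h) (hmono : DynMonotonic ts σh h)
    (hcons : DynConsistent ts σh h) (reeval : Bool)
    (e : ℕ → AConfig S L I) (lab : ℕ → ALab S L) (N : ℕ)
    (hexec : IsExec ts σh h reeval e lab N) :
    -- the f-values popped in the (continuing) iterations are non-decreasing …
    (∀ m n : ℕ, m ≤ n → n < N →
      ∀ em en : Entry S, popped (lab m) = some em → popped (lab n) = some en →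
        fval em ≤ fval en) ∧
    -- … and the entry popped by a final (terminating) step is no exception
    (∀ (l : ALab S L) (o : AOut S L I), AStep ts σh h reeval (e N) l o →
      ∀ m < N, ∀ em en : Entry S,
        popped (lab m) = some em → popped l = some en →
        fval em ≤ fval en) := by
  have hInv : ∀ n, n ≤ N → S14Inv ts σh h (e n) := by
    intro n
    induction n with
    | zero => intro _; rw [hexec.1]; exact inv_init
    | succ k ih =>
        intro hk
        have hkN : k < N := hk
        exact stepInv hmono hcons (ih (le_of_lt hkN)) (hexec.2 k hkN)
  have hE : ∀ n, n ≤ N → ∀ m, m < n → ∀ em, popped (lab m) = some em →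
      ∀ en' ∈ (e n).openq, fval em ≤ fval en' := by
    intro n
    induction n with
    | zero => intro _ m hm; omega
    | succ k ih =>
        intro hn m hm em hpm en' hen'
        have hkN : k < N := hn
        have hstep := hexec.2 k hkN
        rcases Nat.lt_succ_iff_lt_or_eq.mp hm with hm' | rfl
        · obtain ⟨p, hp⟩ := stepCont hstep
          have hhead := stepHead hstep hp
          have hle1 : fval em ≤ fval p := ih (le_of_lt hkN) m hm' em hpm p hhead.1
          have hle2 := stepB hmono hcons (hInv k (le_of_lt hkN)) hstep hp en' hen'
          exact le_trans hle1 hle2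
        · exact stepB hmono hcons (hInv m (le_of_lt hkN)) hstep hpm en' hen'
  constructor
  · intro m n hmn hnN em en hpm hpn
    rcases eq_or_lt_of_le hmn with rfl | hlt
    · rw [hpm] at hpn
      obtain rfl : em = en := by injection hpn
      exact le_rfl
    · have hmem : en ∈ (e n).openq := (stepHead (hexec.2 n hnN) hpn).1
      exact hE n (le_of_lt hnN) m hlt em hpm en hmem
  · intro l o hstep m hm em en hpm hpl
    have hmem : en ∈ (e N).openq := (stepHead hstep hpl).1
    exact hE N le_rfl m hm em hpm en hmem
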